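/- arXiv:2108.03837 — 2 statements merged into one kernel-verified Lean document; each statement's English description precedes it below -/
import Mathlib

section
/- In the AMF framework with T ≥ ln d and η = √(ln d / (4TC²)), suppose the Learner plays arbitrary (not necessarily minimax-optimal) actions x^1, …, x^T, and for each round t let w^t_bd be any real with ψ^t(x^t) ≤ w^t_bd ≤ C, where ψ^t(x) := max_{y∈Y^t} Σ_{j∈[d]} χ^t_j · ℓ^t_j(x, y). Then against any Adversary's choices y^1, …, y^T, max_{j∈[d]} Σ_{t=1}^T ℓ^t_j(x^t, y^t) ≤ Σ_{t=1}^T w^t_bd + 4C·√(T·ln d). -/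
open scoped BigOperators

noncomputable section

/-- Finite-dimensional Euclidean space. -/
abbrev Euc (n : ℕ) := EuclideanSpace ℝ (Fin n)

/-- The exponential weight on coordinate `j` at round `t`:
`χ^t_j = exp(η Σ_{s<t} ℓ^s_j(x^s,y^s)) / Σ_i exp(η Σ_{s<t} ℓ^s_i(x^s,y^s))`. -/
noncomputable def chiWeight {T d N M : ℕ} (η : ℝ)
    (ℓ : Fin T → Euc N → Euc M → Fin d → ℝ)
    (x : Fin T → Euc N) (y : Fin T → Euc M) (t : Fin T) (j : Fin d) : ℝ :=
  Real.exp (η * ∑ s ∈ Finset.Iio t, ℓ s (x s) (y s) j) /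
    ∑ i : Fin d, Real.exp (η * ∑ s ∈ Finset.Iio t, ℓ s (x s) (y s) i)

/-- The objective of the Learner's stage game at round `t`:
`ψ^t(x') = max_{y ∈ Y^t} Σ_j χ^t_j · ℓ^t_j(x', y)`. -/
noncomputable def stageObjective {T d N M : ℕ} (η : ℝ)
    (Y : Fin T → Set (Euc M)) (ℓ : Fin T → Euc N → Euc M → Fin d → ℝ)
    (x : Fin T → Euc N) (y : Fin T → Euc M) (t : Fin T) (x' : Euc N) : ℝ :=
  sSup ((fun yy => ∑ j : Fin d, chiWeight η ℓ x y t j * ℓ t x' yy j) '' Y t)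

/-! The Hedge potential `W_t = Σ_j exp (η Σ_{s<t} ℓ^s_j(x^s, y^s))` drives the proof. Because
`y^t ∈ Y^t`, the `χ^t`-average of the realised losses is at most `ψ^t(x^t) ≤ w^t_bd`; with
`exp a ≤ 1 + a + a²` for `|a| ≤ 1` this gives `W_{t+1} ≤ W_t · exp (η w^t_bd + η²C²)`. Hence
`exp (η L_j) ≤ W_T ≤ d · exp (η Σ_t w^t_bd + T η² C²)` for every cumulative loss `L_j`, i.e.
`L_j ≤ Σ_t w^t_bd + ln d / η + η T C²`, which the chosen `η` makes `(5/2) C √(T ln d)`.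
For `d = 1` we have `η = 0` and `χ^t = 1`, and the round inequalities are simply summed. -/

lemma Real.exp_le_one_add_add_sq {a : ℝ} (ha : |a| ≤ 1) : Real.exp a ≤ 1 + a + a ^ 2 := by
  linarith [(abs_le.mp (Real.abs_exp_sub_one_sub_id_le ha)).2]

lemma Real.exp_mul_le_of_abs_le {η C a : ℝ} (hη : 0 ≤ η) (hηC : η * C ≤ 1) (ha : |a| ≤ C) :
    Real.exp (η * a) ≤ 1 + η * a + η ^ 2 * C ^ 2 := by
  have hηa : |η * a| ≤ η * C := by
    rw [abs_mul, abs_of_nonneg hη]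
    exact mul_le_mul_of_nonneg_left ha hη
  have hsq : (η * a) ^ 2 ≤ (η * C) ^ 2 := sq_le_sq' (abs_le.mp hηa).1 (abs_le.mp hηa).2
  linarith [Real.exp_le_one_add_add_sq (hηa.trans hηC)]

namespace Hedge

variable {ι : Type*}

def cumLoss (g : ℕ → ι → ℝ) (n : ℕ) (i : ι) : ℝ := ∑ k ∈ Finset.range n, g k i

lemma cumLoss_succ (g : ℕ → ι → ℝ) (n : ℕ) (i : ι) :
    cumLoss g (n + 1) i = cumLoss g n i + g n i :=
  Finset.sum_range_succ _ _

variable [Fintype ι]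

def potential (η : ℝ) (g : ℕ → ι → ℝ) (n : ℕ) : ℝ := ∑ i, Real.exp (η * cumLoss g n i)

def weight (η : ℝ) (g : ℕ → ι → ℝ) (n : ℕ) (i : ι) : ℝ :=
  Real.exp (η * cumLoss g n i) / potential η g n

variable {η C : ℝ} {g : ℕ → ι → ℝ} {n : ℕ}

lemma potential_pos [Nonempty ι] : 0 < potential η g n :=
  Finset.sum_pos (fun _ _ => Real.exp_pos _) Finset.univ_nonempty

lemma potential_zero : potential η g 0 = Fintype.card ι := by
  simp [potential, cumLoss]

lemma exp_cumLoss_le_potential (j : ι) : Real.exp (η * cumLoss g n j) ≤ potential η g n :=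
  Finset.single_le_sum (f := fun i => Real.exp (η * cumLoss g n i))
    (fun _ _ => (Real.exp_pos _).le) (Finset.mem_univ j)

lemma weight_nonneg (i : ι) : 0 ≤ weight η g n i :=
  div_nonneg (Real.exp_pos _).le (Finset.sum_nonneg fun _ _ => (Real.exp_pos _).le)

lemma sum_weight [Nonempty ι] : ∑ i, weight η g n i = 1 := by
  simp only [weight, ← Finset.sum_div]
  exact div_self potential_pos.ne'

lemma weight_of_subsingleton [Subsingleton ι] (i : ι) : weight η g n i = 1 := by
  have : Nonempty ι := ⟨i⟩
  simpa [Fintype.sum_subsingleton _ i] using (sum_weight (η := η) (g := g) (n := n))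

lemma sum_exp_mul_eq [Nonempty ι] (v : ι → ℝ) :
    ∑ i, Real.exp (η * cumLoss g n i) * v i = potential η g n * ∑ i, weight η g n i * v i := by
  rw [Finset.mul_sum]
  refine Finset.sum_congr rfl fun i _ => ?_
  rw [weight, ← mul_assoc, mul_div_cancel₀ _ potential_pos.ne']

lemma potential_succ_le [Nonempty ι] {w : ℝ} (hη : 0 ≤ η) (hηC : η * C ≤ 1)
    (hg : ∀ i, |g n i| ≤ C) (hw : ∑ i, weight η g n i * g n i ≤ w) :
    potential η g (n + 1) ≤ potential η g n * Real.exp (η * w + η ^ 2 * C ^ 2) := by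
  calc potential η g (n + 1)
      = ∑ i, Real.exp (η * cumLoss g n i) * Real.exp (η * g n i) := by
        simp only [potential, cumLoss_succ, mul_add, Real.exp_add]
    _ ≤ ∑ i, Real.exp (η * cumLoss g n i) * (1 + η * g n i + η ^ 2 * C ^ 2) :=
        Finset.sum_le_sum fun i _ => mul_le_mul_of_nonneg_left
          (Real.exp_mul_le_of_abs_le hη hηC (hg i)) (Real.exp_pos _).le
    _ = potential η g n * (1 + η ^ 2 * C ^ 2)
          + η * (potential η g n * ∑ i, weight η g n i * g n i) := by
        rw [← sum_exp_mul_eq, Finset.mul_sum, potential, Finset.sum_mul, ← Finset.sum_add_distrib]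
        exact Finset.sum_congr rfl fun i _ => by ring
    _ ≤ potential η g n * (1 + (η * w + η ^ 2 * C ^ 2)) := by
        nlinarith [mul_le_mul_of_nonneg_left hw (mul_nonneg hη (potential_pos (η := η) (g := g) (n := n)).le)]
    _ ≤ potential η g n * Real.exp (η * w + η ^ 2 * C ^ 2) :=
        mul_le_mul_of_nonneg_left (by linarith [Real.add_one_le_exp (η * w + η ^ 2 * C ^ 2)])
          potential_pos.le

lemma potential_le [Nonempty ι] {w : ℕ → ℝ} (hη : 0 ≤ η) (hηC : η * C ≤ 1)
    (hg : ∀ k < n, ∀ i, |g k i| ≤ C) (hw : ∀ k < n, ∑ i, weight η g k i * g k i ≤ w k) :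
    potential η g n ≤
      Fintype.card ι * Real.exp (η * ∑ k ∈ Finset.range n, w k + n * (η ^ 2 * C ^ 2)) := by
  induction n with
  | zero => simp [potential_zero]
  | succ n ih =>
    calc potential η g (n + 1)
        ≤ potential η g n * Real.exp (η * w n + η ^ 2 * C ^ 2) :=
          potential_succ_le hη hηC (hg n n.lt_succ_self) (hw n n.lt_succ_self)
      _ ≤ Fintype.card ι * Real.exp (η * ∑ k ∈ Finset.range n, w k + n * (η ^ 2 * C ^ 2))
            * Real.exp (η * w n + η ^ 2 * C ^ 2) :=
          mul_le_mul_of_nonneg_right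
            (ih (fun k hk => hg k (hk.trans n.lt_succ_self))
              (fun k hk => hw k (hk.trans n.lt_succ_self)))
            (Real.exp_pos _).le
      _ = _ := by
          rw [mul_assoc, ← Real.exp_add, Finset.sum_range_succ]
          push_cast
          ring_nf

lemma cumLoss_le {w : ℕ → ℝ} (hη : 0 < η) (hηC : η * C ≤ 1)
    (hg : ∀ k < n, ∀ i, |g k i| ≤ C) (hw : ∀ k < n, ∑ i, weight η g k i * g k i ≤ w k)
    (j : ι) :
    cumLoss g n j ≤ ∑ k ∈ Finset.range n, w k + Real.log (Fintype.card ι) / η + η * n * C ^ 2 := by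
  have : Nonempty ι := ⟨j⟩
  have hexp := (exp_cumLoss_le_potential j).trans (potential_le hη.le hηC hg hw)
  rw [← Real.log_le_log_iff (Real.exp_pos _) (by positivity), Real.log_exp,
    Real.log_mul (by positivity) (Real.exp_ne_zero _), Real.log_exp] at hexp
  have hscale : η * (∑ k ∈ Finset.range n, w k + Real.log (Fintype.card ι) / η + η * n * C ^ 2)
      = Real.log (Fintype.card ι) + (η * ∑ k ∈ Finset.range n, w k + n * (η ^ 2 * C ^ 2)) := by
    field_simp
    ring
  exact le_of_mul_le_mul_left (hexp.trans_eq hscale.symm) hη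

end Hedge

section ExtendByZero

variable {T : ℕ} {M : Type*}

def extendByZero [Zero M] (f : Fin T → M) (k : ℕ) : M := if h : k < T then f ⟨k, h⟩ else 0

@[simp]
lemma extendByZero_val [Zero M] (f : Fin T → M) (t : Fin T) : extendByZero f t = f t :=
  dif_pos t.isLt

lemma sum_range_extendByZero [AddCommMonoid M] (f : Fin T → M) :
    ∑ k ∈ Finset.range T, extendByZero f k = ∑ t, f t :=
  (Finset.sum_fin_eq_sum_range f).symm

lemma sum_Iio_eq_sum_range_extendByZero [AddCommMonoid M] (f : Fin T → M) (t : Fin T) :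
    ∑ s ∈ Finset.Iio t, f s = ∑ k ∈ Finset.range t, extendByZero f k := by
  rw [← Nat.Iio_eq_range, ← Fin.map_valEmbedding_Iio, Finset.sum_map]
  simp

end ExtendByZero

section AMF

variable {T d N M : ℕ} {η : ℝ} {ℓ : Fin T → Euc N → Euc M → Fin d → ℝ}
  {x : Fin T → Euc N} {y : Fin T → Euc M}

def realisedLoss (ℓ : Fin T → Euc N → Euc M → Fin d → ℝ) (x : Fin T → Euc N)
    (y : Fin T → Euc M) (k : ℕ) (j : Fin d) : ℝ :=
  extendByZero (fun t => ℓ t (x t) (y t) j) k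

@[simp]
lemma realisedLoss_val (t : Fin T) (j : Fin d) :
    realisedLoss ℓ x y t j = ℓ t (x t) (y t) j :=
  extendByZero_val _ t

lemma cumLoss_realisedLoss (j : Fin d) :
    Hedge.cumLoss (realisedLoss ℓ x y) T j = ∑ t, ℓ t (x t) (y t) j :=
  sum_range_extendByZero _

lemma chiWeight_eq_weight (t : Fin T) (j : Fin d) :
    chiWeight η ℓ x y t j = Hedge.weight η (realisedLoss ℓ x y) t j := by
  simp only [chiWeight, Hedge.weight, Hedge.potential, Hedge.cumLoss, realisedLoss,
    sum_Iio_eq_sum_range_extendByZero]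

lemma sum_chiWeight_mul_le_stageObjective {Y : Fin T → Set (Euc M)} {C : ℝ} {t : Fin T}
    {x' : Euc N} {y' : Euc M} (hbdd : ∀ j, ∀ yy ∈ Y t, ℓ t x' yy j ≤ C) (hy' : y' ∈ Y t) :
    ∑ j, chiWeight η ℓ x y t j * ℓ t x' y' j ≤ stageObjective η Y ℓ x y t x' := by
  refine le_csSup ⟨∑ j, chiWeight η ℓ x y t j * C, ?_⟩ ⟨y', hy', rfl⟩
  rintro _ ⟨yy, hyy, rfl⟩
  refine Finset.sum_le_sum fun j _ => mul_le_mul_of_nonneg_left (hbdd j yy hyy) ?_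
  rw [chiWeight_eq_weight]
  exact Hedge.weight_nonneg j

end AMF

section LearningRate

variable {D T C η : ℝ}

lemma mul_le_one_of_eq_sqrt (hD : 0 < D) (hDT : D ≤ T) (hC : 0 < C)
    (hη : η = √(D / (4 * T * C ^ 2))) : η * C ≤ 1 := by
  have hT : 0 < T := hD.trans_le hDT
  have hsq : (η * C) ^ 2 ≤ 1 := by
    rw [mul_pow, hη, Real.sq_sqrt (by positivity), div_mul_eq_mul_div, div_le_one (by positivity)]
    nlinarith [sq_pos_of_pos hC]
  nlinarith [sq_nonneg (η * C - 1)]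

lemma div_add_mul_le_of_eq_sqrt (hD : 0 < D) (hT : 0 < T) (hC : 0 < C)
    (hη : η = √(D / (4 * T * C ^ 2))) : D / η + η * T * C ^ 2 ≤ 4 * C * √(T * D) := by
  have hηpos : 0 < η := hη ▸ Real.sqrt_pos.mpr (by positivity)
  have hD_eq : D = 4 * T * C ^ 2 * η ^ 2 := by
    rw [hη, Real.sq_sqrt (by positivity)]
    field_simp
  have hsqrt : √(T * D) = 2 * T * C * η := by
    rw [show T * D = (2 * T * C * η) ^ 2 by rw [hD_eq]; ring]
    exact Real.sqrt_sq (by positivity)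
  rw [hsqrt, hD_eq]
  field_simp
  nlinarith [mul_pos (mul_pos hT (pow_pos hC 2)) (pow_pos hηpos 2)]

end LearningRate

theorem amf_suboptimal_learner_bound_general
    (T d N M : ℕ) (hd : 1 ≤ d) (C : ℝ) (hC : 0 < C)
    (X : Fin T → Set (Euc N)) (Y : Fin T → Set (Euc M))
    (ℓ : Fin T → Euc N → Euc M → Fin d → ℝ)
    (hbdd : ∀ t j, ∀ x ∈ X t, ∀ y ∈ Y t, |ℓ t x y j| ≤ C)
    (hT : Real.log d ≤ T)
    (η : ℝ) (hη : η = Real.sqrt (Real.log d / (4 * T * C ^ 2)))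
    (x : Fin T → Euc N) (y : Fin T → Euc M)
    (hx : ∀ t, x t ∈ X t) (hy : ∀ t, y t ∈ Y t)
    (wbd : Fin T → ℝ)
    (hwbd : ∀ t, stageObjective η Y ℓ x y t (x t) ≤ wbd t ∧ wbd t ≤ C) :
    (⨆ j : Fin d, ∑ t, ℓ t (x t) (y t) j) ≤
      (∑ t, wbd t) + 4 * C * Real.sqrt (T * Real.log d) := by
  have hround : ∀ t, ∑ j, chiWeight η ℓ x y t j * ℓ t (x t) (y t) j ≤ wbd t := fun t =>
    (sum_chiWeight_mul_le_stageObjective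
      (fun j yy hyy => (abs_le.mp (hbdd t j _ (hx t) yy hyy)).2) (hy t)).trans (hwbd t).1
  have : Nonempty (Fin d) := ⟨⟨0, hd⟩⟩
  refine ciSup_le fun j => ?_
  obtain rfl | hd2 := hd.eq_or_lt
  · have hsum : ∑ t, ℓ t (x t) (y t) j ≤ ∑ t, wbd t := Finset.sum_le_sum fun t _ => by
      simpa [chiWeight_eq_weight, Hedge.weight_of_subsingleton, Subsingleton.elim j 0] using hround t
    exact hsum.trans (le_add_of_nonneg_right (by positivity))
  · have hD : 0 < Real.log d := Real.log_pos (by exact_mod_cast hd2)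
    have hTpos : (0 : ℝ) < T := hD.trans_le hT
    have hloss : ∀ k < T, ∀ i, |realisedLoss ℓ x y k i| ≤ C := by
      intro k hk i
      lift k to Fin T using hk
      simpa using hbdd k i _ (hx k) _ (hy k)
    have hmix : ∀ k < T, ∑ i, Hedge.weight η (realisedLoss ℓ x y) k i * realisedLoss ℓ x y k i
        ≤ extendByZero wbd k := by
      intro k hk
      lift k to Fin T using hk
      simpa [chiWeight_eq_weight] using hround k
    have hregret := Hedge.cumLoss_le (hη ▸ Real.sqrt_pos.mpr (by positivity))
      (mul_le_one_of_eq_sqrt hD hT hC hη) hloss hmix j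
    rw [cumLoss_realisedLoss, sum_range_extendByZero, Fintype.card_fin] at hregret
    linarith [div_add_mul_le_of_eq_sqrt hD hTpos hC hη]

/-- **bounds for a suboptimal Learner, deterministic case.**
With `T ≥ ln d` and `η = √(ln d/(4TC²))`, if the Learner plays arbitrary actions
`x^1, …, x^T` and `w^t_bd` are achieved AMF value bounds, i.e.
`ψ^t(x^t) ≤ w^t_bd ≤ C`, then against any Adversary
`max_j Σ_t ℓ^t_j(x^t,y^t) ≤ Σ_t w^t_bd + 4C√(T ln d)`. -/
theorem amf_suboptimal_learner_bound
    (T d N M : ℕ) (hd : 1 ≤ d) (C : ℝ) (hC : 0 < C)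
    (X : Fin T → Set (Euc N)) (Y : Fin T → Set (Euc M))
    (ℓ : Fin T → Euc N → Euc M → Fin d → ℝ)
    (hXconv : ∀ t, Convex ℝ (X t)) (hXcomp : ∀ t, IsCompact (X t))
    (hXne : ∀ t, (X t).Nonempty)
    (hYconv : ∀ t, Convex ℝ (Y t)) (hYcomp : ∀ t, IsCompact (Y t))
    (hYne : ∀ t, (Y t).Nonempty)
    (hcont : ∀ t j, ContinuousOn (fun p : Euc N × Euc M => ℓ t p.1 p.2 j) (X t ×ˢ Y t))
    (hbdd : ∀ t j, ∀ x ∈ X t, ∀ y ∈ Y t, |ℓ t x y j| ≤ C)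
    (hconv : ∀ t j, ∀ y ∈ Y t, ConvexOn ℝ (X t) (fun x => ℓ t x y j))
    (hconc : ∀ t j, ∀ x ∈ X t, ConcaveOn ℝ (Y t) (fun y => ℓ t x y j))
    (hT : Real.log d ≤ T)
    (η : ℝ) (hη : η = Real.sqrt (Real.log d / (4 * T * C ^ 2)))
    (x : Fin T → Euc N) (y : Fin T → Euc M)
    (hx : ∀ t, x t ∈ X t) (hy : ∀ t, y t ∈ Y t)
    (wbd : Fin T → ℝ)
    (hwbd : ∀ t, stageObjective η Y ℓ x y t (x t) ≤ wbd t ∧ wbd t ≤ C) :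
    (⨆ j : Fin d, ∑ t, ℓ t (x t) (y t) j) ≤
      (∑ t, wbd t) + 4 * C * Real.sqrt (T * Real.log d) :=
  amf_suboptimal_learner_bound_general T d N M hd C hC X Y ℓ hbdd hT η hη x y hx hy wbd hwbd

end
end

section
/- In the experts setting with finite action set A and T ≥ 2·ln|A|, there exists an algorithm for the Learner guaranteeing, against any adaptive Adversary, expected internal regret E[R^T_int] ≤ 4·√(2T·ln|A|). -/
open scoped BigOperators

noncomputable section

/-- The prefix of a full transcript `a` before round `t`. -/
def transcriptPrefix {A : Type*} {T : ℕ} (a : Fin T → A) (t : Fin T) : Fin t.1 → A :=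
  fun s => a ⟨s.1, s.2.trans t.2⟩

/-- The prefix of a history `h` before its `s`-th entry. -/
def historyPrefix {A : Type*} {m : ℕ} (h : Fin m → A) (s : Fin m) : Fin s.1 → A :=
  fun u => h ⟨u.1, u.2.trans s.2⟩

/-- A learner's algorithm in the experts setting: at round `t` it maps the realized
history of its actions and the past loss vectors to a distribution over actions. -/
def ExpertStrategy (A : Type) (T : ℕ) : Type :=
  ∀ t : Fin T, (Fin t.1 → A) → (Fin t.1 → A → ℝ) → A → ℝ

/-- The per-round play induced by a strategy `σ` against the adaptive Adversary `r`. -/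
noncomputable def playOf {A : Type} {T : ℕ} (σ : ExpertStrategy A T)
    (r : ∀ t : Fin T, (Fin t.1 → A) → A → ℝ)
    (t : Fin T) (h : Fin t.1 → A) : A → ℝ :=
  σ t h (fun s => r ⟨s.1, s.2.trans t.2⟩ (historyPrefix h s))

/-- The probability of a full transcript `a` when the Learner plays the per-round
distributions `x`. -/
noncomputable def transcriptProb {A : Type} [Fintype A] {T : ℕ}
    (x : ∀ t : Fin T, (Fin t.1 → A) → A → ℝ) (a : Fin T → A) : ℝ :=
  ∏ t, x t (transcriptPrefix a t) (a t)

/-!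
The Learner runs exponential weights over the pairs `p = (i, j)`, whose gain in a round where
it plays `x` against losses `v` is `x i * (v i - v j)`, the expected loss it would have saved
by playing `j` whenever it drew `i`. Given the weights `q`, it plays a stationary distribution
`x` of the Markov chain that moves from `i` to `j` at rate `q (i, j)`. Stationarity says exactly
that the `q`-average of the gains vanishes, so the potential `∑ p, exp (η G p)` of the
cumulative gains `G` grows by at most a factor `1 + η²` per round, and
`G p ≤ (log |A|² + η² T) / η` along every play. The realized regret for `p` differs from `G p`
by a sum of martingale differences bounded by `1`, whose exponential moment is also at most
`(1 + η²) ^ T`. Bounding the maximum over `p` by log-sum-exp and applying Jensen's inequality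
gives `E[R_int] ≤ 4 log |A| / η + 2 η T`, and `η = √(2 log |A| / T)` (at most `1` because
`T ≥ 2 log |A|`) balances the two terms.
-/

open Finset Real Matrix Filter Topology

theorem abs_mul_sub_le_one {a b c : ℝ} (ha : |a| ≤ 1) (hb : b ∈ Set.Icc (0 : ℝ) 1)
    (hc : c ∈ Set.Icc (0 : ℝ) 1) : |a * (b - c)| ≤ 1 := by
  rw [abs_mul]
  exact mul_le_one₀ ha (abs_nonneg _) (abs_sub_le_of_nonneg_of_le hb.1 hb.2 hc.1 hc.2)

theorem sum_mul_exp_le_of_sum_mul_eq_zero {ι : Type*} [Fintype ι] {w d : ι → ℝ} {η : ℝ}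
    (hw : ∀ i, 0 ≤ w i) (hd : ∀ i, |d i| ≤ 1) (hwd : ∑ i, w i * d i = 0) (hη0 : 0 ≤ η)
    (hη1 : η ≤ 1) : ∑ i, w i * exp (η * d i) ≤ (1 + η ^ 2) * ∑ i, w i := by
  have hexp : ∀ i, exp (η * d i) ≤ 1 + η * d i + η ^ 2 := fun i => by
    have hsq : (η * d i) ^ 2 ≤ η ^ 2 := by
      rw [mul_pow]
      exact mul_le_of_le_one_right (sq_nonneg η) ((sq_le_one_iff_abs_le_one _).2 (hd i))
    have hηd : |η * d i| ≤ 1 := (sq_le_one_iff_abs_le_one _).1 (by nlinarith)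
    linarith [(abs_le.1 (abs_exp_sub_one_sub_id_le hηd)).2]
  calc ∑ i, w i * exp (η * d i) ≤ ∑ i, w i * (1 + η * d i + η ^ 2) :=
        sum_le_sum fun i _ => mul_le_mul_of_nonneg_left (hexp i) (hw i)
    _ = (1 + η ^ 2) * ∑ i, w i + η * ∑ i, w i * d i := by
        simp only [mul_sum, ← sum_add_distrib]
        exact sum_congr rfl fun i _ => by ring
    _ = (1 + η ^ 2) * ∑ i, w i := by rw [hwd, mul_zero, add_zero]

theorem sum_exp_mul_sum_range_le {P : Type*} [Fintype P] {g : ℕ → P → ℝ} {η : ℝ}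
    (hg : ∀ t p, |g t p| ≤ 1) (hzero : ∀ t, ∑ p, exp (η * ∑ s ∈ range t, g s p) * g t p = 0)
    (hη0 : 0 ≤ η) (hη1 : η ≤ 1) (n : ℕ) :
    ∑ p, exp (η * ∑ s ∈ range n, g s p) ≤ Fintype.card P * (1 + η ^ 2) ^ n := by
  induction n with
  | zero => simp
  | succ n ih =>
    simp_rw [sum_range_succ, mul_add, exp_add]
    calc _ ≤ (1 + η ^ 2) * ∑ p, exp (η * ∑ s ∈ range n, g s p) :=
          sum_mul_exp_le_of_sum_mul_eq_zero (fun p => (exp_pos _).le) (hg n) (hzero n) hη0 hη1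
      _ ≤ (1 + η ^ 2) * (Fintype.card P * (1 + η ^ 2) ^ n) := by gcongr
      _ = _ := by ring

theorem sum_mul_iSup_le_of_sum_mul_exp_le {Ω P : Type*} [Fintype Ω] [Fintype P] [Nonempty P]
    {w : Ω → ℝ} (hw0 : ∀ ω, 0 ≤ w ω) (hw1 : ∑ ω, w ω = 1) {R : Ω → P → ℝ} {η B : ℝ}
    (hη : 0 < η) (hB : ∀ p, ∑ ω, w ω * exp (η * R ω p) ≤ B) :
    ∑ ω, w ω * ⨆ p, R ω p ≤ log (Fintype.card P * B) / η := by
  set S : Ω → ℝ := fun ω => ∑ p, exp (η * R ω p)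
  have hS : ∀ ω, 0 < S ω := fun ω => sum_pos (fun p _ => exp_pos _) univ_nonempty
  have hmax : ∀ ω, ⨆ p, R ω p ≤ log (S ω) / η := fun ω => ciSup_le fun p => by
    rw [le_div_iff₀' hη, ← log_exp (η * R ω p)]
    exact log_le_log (exp_pos _)
      (single_le_sum (f := fun p => exp (η * R ω p)) (fun p _ => (exp_pos _).le) (mem_univ p))
  have hjensen : ∑ ω, w ω * log (S ω) ≤ log (∑ ω, w ω * S ω) := by
    simpa using strictConcaveOn_log_Ioi.concaveOn.le_map_sum (fun ω _ => hw0 ω) hw1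
      (fun ω _ => hS ω)
  have hmean : ∑ ω, w ω * S ω ≤ Fintype.card P * B :=
    calc ∑ ω, w ω * S ω = ∑ p, ∑ ω, w ω * exp (η * R ω p) := by
          simp only [S, mul_sum]
          exact sum_comm
      _ ≤ ∑ _p : P, B := sum_le_sum fun p _ => hB p
      _ = Fintype.card P * B := by simp
  have hpos : 0 < ∑ ω, w ω * S ω := by
    obtain ⟨ω, -, hω⟩ := exists_lt_of_sum_lt (f := 0) (g := w) (s := univ) (by simp [hw1])
    exact sum_pos' (fun ω _ => mul_nonneg (hw0 ω) (hS ω).le) ⟨ω, mem_univ _, mul_pos hω (hS ω)⟩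
  calc ∑ ω, w ω * ⨆ p, R ω p ≤ ∑ ω, w ω * (log (S ω) / η) :=
        sum_le_sum fun ω _ => mul_le_mul_of_nonneg_left (hmax ω) (hw0 ω)
    _ = (∑ ω, w ω * log (S ω)) / η := by
        rw [sum_div]
        exact sum_congr rfl fun ω _ => (mul_div_assoc _ _ _).symm
    _ ≤ log (Fintype.card P * B) / η := by
        gcongr
        exact hjensen.trans (log_le_log hpos hmean)

theorem LinearMap.exists_fixedPoint_of_mapsTo {E : Type*} [NormedAddCommGroup E]
    [NormedSpace ℝ E] (f : E →ₗ[ℝ] E) (hf : Continuous f) {K : Set E} (hK : IsCompact K)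
    (hKc : Convex ℝ K) (hKn : K.Nonempty) (hfK : Set.MapsTo f K K) : ∃ x ∈ K, f x = x := by
  obtain ⟨x₀, hx₀⟩ := hKn
  obtain ⟨C, hC⟩ := isBounded_iff_forall_norm_le.1 hK.isBounded
  set u : ℕ → E := fun m => f^[m] x₀
  have hu : ∀ m, u m ∈ K := fun m => hfK.iterate m hx₀
  -- Cesàro averages of the orbit are almost fixed.
  set y : ℕ → E := fun n => ((n : ℝ) + 1)⁻¹ • ∑ m ∈ Finset.range (n + 1), u m
  have hy : ∀ n, y n ∈ K := fun n => by
    convert hKc.centerMass_mem (t := Finset.range (n + 1)) (w := fun _ => (1 : ℝ))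
      (fun _ _ => zero_le_one) (sum_pos (fun _ _ => one_pos) Finset.nonempty_range_add_one)
      (fun m _ => hu m) using 1
    simp [Finset.centerMass, y]
  have hfy : ∀ n, f (y n) - y n = ((n : ℝ) + 1)⁻¹ • (u (n + 1) - u 0) := fun n => by
    simp only [y, map_smul, map_sum, ← smul_sub, ← sum_sub_distrib]
    rw [← sum_range_sub u]
    congr 2 with m
    rw [show u (m + 1) = f (u m) from Function.iterate_succ_apply' f m x₀]
  have hlim : Tendsto (fun n => f (y n) - y n) atTop (𝓝 0) := by
    refine squeeze_zero_norm (a := fun n : ℕ => 2 * C * (1 / ((n : ℝ) + 1))) (fun n => ?_) ?_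
    · rw [hfy, norm_smul, Real.norm_of_nonneg (by positivity), one_div, mul_comm]
      gcongr
      calc ‖u (n + 1) - u 0‖ ≤ ‖u (n + 1)‖ + ‖u 0‖ := norm_sub_le _ _
        _ ≤ 2 * C := by linarith [hC _ (hu (n + 1)), hC _ (hu 0)]
    · simpa using tendsto_one_div_add_atTop_nhds_zero_nat.const_mul (2 * C)
  obtain ⟨x, hx, φ, hφ, hyx⟩ := hK.tendsto_subseq hy
  refine ⟨x, hx, sub_eq_zero.1 (tendsto_nhds_unique ?_ (hlim.comp hφ.tendsto_atTop))⟩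
  exact ((hf.tendsto x).comp hyx).sub hyx

theorem Matrix.exists_mem_stdSimplex_vecMul_eq_self {n : Type*} [Fintype n] [DecidableEq n]
    [Nonempty n] {M : Matrix n n ℝ} (hM : M ∈ rowStochastic ℝ n) :
    ∃ x ∈ stdSimplex ℝ n, x ᵥ* M = x := by
  refine M.vecMulLinear.exists_fixedPoint_of_mapsTo (LinearMap.continuous_on_pi _)
    (isCompact_stdSimplex ℝ n) (convex_stdSimplex ℝ n)
    ⟨_, single_mem_stdSimplex ℝ (Classical.arbitrary n)⟩ fun x hx => ⟨?_, ?_⟩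
  · exact nonneg_vecMul_of_mem_rowStochastic hM hx.1
  · have := vecMul_dotProduct_one_eq_one_rowStochastic hM (x := x) (by rw [dotProduct_one, hx.2])
    rwa [dotProduct_one] at this

section Swap
variable {A : Type} [Fintype A]

def swapGain (x v : A → ℝ) (p : A × A) : ℝ := x p.1 * (v p.1 - v p.2)

theorem abs_swapGain_le_one {x v : A → ℝ} (hx : x ∈ stdSimplex ℝ A)
    (hv : ∀ k, v k ∈ Set.Icc (0 : ℝ) 1) (p : A × A) : |swapGain x v p| ≤ 1 := by
  have := mem_Icc_of_mem_stdSimplex hx p.1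
  exact abs_mul_sub_le_one (abs_le.2 ⟨by linarith [this.1], this.2⟩) (hv p.1) (hv p.2)

variable [DecidableEq A]

theorem sum_mul_comp_update_id (x v : A → ℝ) (p : A × A) :
    ∑ l, x l * v (Function.update id p.1 p.2 l) = x ⬝ᵥ v - swapGain x v p := by
  have h : ∀ l, x l * v (Function.update id p.1 p.2 l) =
      x l * v l - if l = p.1 then x p.1 * (v p.1 - v p.2) else 0 := fun l => by
    rcases eq_or_ne l p.1 with rfl | hl
    · rw [Function.update_self, if_pos rfl]
      ring
    · rw [Function.update_of_ne hl, id, if_neg hl, sub_zero]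
  simp_rw [h, sum_sub_distrib, sum_ite_eq']
  simp [dotProduct, swapGain]

-- From `l`, the chain applies the paper's map `μ_{i→j} = Function.update id i j` with weight
-- `q (i, j)`.
def swapMatrix (q : A × A → ℝ) : Matrix A A ℝ :=
  Matrix.of fun l k => ∑ p, q p * if Function.update id p.1 p.2 l = k then 1 else 0

theorem sum_swapMatrix_apply (q : A × A → ℝ) (l : A) : ∑ k, swapMatrix q l k = ∑ p, q p := by
  simp [swapMatrix, Finset.sum_comm (γ := A)]

theorem vecMul_swapMatrix_dotProduct (q : A × A → ℝ) (x v : A → ℝ) :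
    (x ᵥ* swapMatrix q) ⬝ᵥ v = ∑ p, q p * (x ⬝ᵥ v - swapGain x v p) := by
  simp_rw [← sum_mul_comp_update_id]
  simp only [vecMul, dotProduct, swapMatrix, of_apply, Finset.sum_mul, Finset.mul_sum]
  rw [Finset.sum_comm]
  conv_rhs => rw [Finset.sum_comm]
  refine sum_congr rfl fun l _ => ?_
  rw [Finset.sum_comm]
  refine sum_congr rfl fun p _ => ?_
  simp only [mul_ite, mul_one, mul_zero, ite_mul, zero_mul, sum_ite_eq, mem_univ, if_true]
  ring

variable [Nonempty A]

theorem exists_mem_stdSimplex_sum_mul_swapGain_eq_zero {q : A × A → ℝ}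
    (hq : ∀ p, 0 ≤ q p) : ∃ x ∈ stdSimplex ℝ A, ∀ v, ∑ p, q p * swapGain x v p = 0 := by
  set Q := ∑ p, q p
  have hQ : 0 ≤ Q := sum_nonneg fun p _ => hq p
  -- The lazy chain `(1 + Q)⁻¹ (1 + swapMatrix q)` is row-stochastic without normalizing `q`.
  have hM : (1 + Q)⁻¹ • (1 + swapMatrix q) ∈ rowStochastic ℝ A := by
    refine mem_rowStochastic_iff_sum.2 ⟨fun l k => ?_, fun l => ?_⟩
    · have : 0 ≤ swapMatrix q l k := sum_nonneg fun p _ => mul_nonneg (hq p) (by positivity)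
      simp only [Matrix.smul_apply, Matrix.add_apply, one_apply, smul_eq_mul]
      positivity
    · simp only [Matrix.smul_apply, Matrix.add_apply, Matrix.one_apply, smul_eq_mul, ← mul_sum,
        sum_add_distrib, sum_ite_eq, mem_univ, if_true, sum_swapMatrix_apply]
      exact inv_mul_cancel₀ (by positivity)
  obtain ⟨x, hx, hfix⟩ := exists_mem_stdSimplex_vecMul_eq_self hM
  have hS : x ᵥ* swapMatrix q = Q • x := by
    rw [vecMul_smul, vecMul_add, vecMul_one, inv_smul_eq_iff₀ (by positivity), add_smul,
      one_smul] at hfix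
    exact add_left_cancel hfix
  refine ⟨x, hx, fun v => ?_⟩
  have := vecMul_swapMatrix_dotProduct q x v
  rw [hS, smul_dotProduct] at this
  simp only [smul_eq_mul, mul_sub, sum_sub_distrib, ← sum_mul] at this
  linarith

def swapStationary (q : A × A → ℝ) (hq : ∀ p, 0 ≤ q p) : A → ℝ :=
  (exists_mem_stdSimplex_sum_mul_swapGain_eq_zero hq).choose

theorem swapStationary_mem_stdSimplex (q : A × A → ℝ) (hq : ∀ p, 0 ≤ q p) :
    swapStationary q hq ∈ stdSimplex ℝ A :=
  (exists_mem_stdSimplex_sum_mul_swapGain_eq_zero hq).choose_spec.1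

theorem sum_mul_swapGain_swapStationary (q : A × A → ℝ) (hq : ∀ p, 0 ≤ q p) (v : A → ℝ) :
    ∑ p, q p * swapGain (swapStationary q hq) v p = 0 :=
  (exists_mem_stdSimplex_sum_mul_swapGain_eq_zero hq).choose_spec.2 v

def expWeightsPlay (η : ℝ) (G : A × A → ℝ) : A → ℝ :=
  swapStationary (fun p => exp (η * G p)) fun _ => (exp_pos _).le

theorem expWeightsPlay_mem_stdSimplex (η : ℝ) (G : A × A → ℝ) :
    expWeightsPlay η G ∈ stdSimplex ℝ A :=
  swapStationary_mem_stdSimplex _ _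

def cumSwapGain (η : ℝ) (ℓ : ℕ → A → ℝ) : ℕ → A × A → ℝ
  | 0 => 0
  | n + 1 => cumSwapGain η ℓ n + swapGain (expWeightsPlay η (cumSwapGain η ℓ n)) (ℓ n)

theorem cumSwapGain_eq_sum (η : ℝ) (ℓ : ℕ → A → ℝ) (n : ℕ) (p : A × A) :
    cumSwapGain η ℓ n p =
      ∑ s ∈ range n, swapGain (expWeightsPlay η (cumSwapGain η ℓ s)) (ℓ s) p := by
  induction n with
  | zero => rfl
  | succ n ih => rw [sum_range_succ, ← ih]; rfl

theorem cumSwapGain_congr (η : ℝ) {ℓ ℓ' : ℕ → A → ℝ} {n : ℕ} (h : ∀ s < n, ℓ s = ℓ' s) :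
    cumSwapGain η ℓ n = cumSwapGain η ℓ' n := by
  induction n with
  | zero => rfl
  | succ n ih =>
    simp only [cumSwapGain, ih fun s hs => h s (hs.trans n.lt_succ_self), h n n.lt_succ_self]

theorem exp_mul_cumSwapGain_le {η : ℝ} {ℓ : ℕ → A → ℝ} (hℓ : ∀ n k, ℓ n k ∈ Set.Icc (0 : ℝ) 1)
    (hη0 : 0 ≤ η) (hη1 : η ≤ 1) (n : ℕ) (p : A × A) :
    exp (η * cumSwapGain η ℓ n p) ≤ Fintype.card (A × A) * (1 + η ^ 2) ^ n := by
  have hpotential := sum_exp_mul_sum_range_le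
    (g := fun s q => swapGain (expWeightsPlay η (cumSwapGain η ℓ s)) (ℓ s) q)
    (fun s q => abs_swapGain_le_one (expWeightsPlay_mem_stdSimplex _ _) (hℓ s) q)
    (fun t => by
      simp only [← cumSwapGain_eq_sum]
      exact sum_mul_swapGain_swapStationary _ _ _) hη0 hη1 n
  simp only [← cumSwapGain_eq_sum] at hpotential
  exact (single_le_sum (f := fun q => exp (η * cumSwapGain η ℓ n q)) (fun q _ => (exp_pos _).le)
    (mem_univ p)).trans hpotential

def swapStrategy (T : ℕ) (η : ℝ) : ExpertStrategy A T :=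
  fun t _ past => expWeightsPlay η (cumSwapGain η (Function.extend Fin.val past 0) t)

end Swap

theorem transcriptPrefix_snoc_castSucc {A : Type*} {T : ℕ} (a : Fin T → A) (k : A) (t : Fin T) :
    transcriptPrefix (Fin.snoc a k : Fin (T + 1) → A) t.castSucc = transcriptPrefix a t :=
  funext fun u => Fin.snoc_castSucc (α := fun _ => A) k a ⟨u.1, u.2.trans t.2⟩

theorem transcriptPrefix_snoc_last {A : Type*} {T : ℕ} (a : Fin T → A) (k : A) :
    transcriptPrefix (Fin.snoc a k : Fin (T + 1) → A) (Fin.last T) = a :=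
  funext fun u => Fin.snoc_castSucc (α := fun _ => A) k a u

section Transcript
variable {A : Type} [Fintype A] {T : ℕ}

theorem transcriptProb_nonneg {x : ∀ t : Fin T, (Fin t.1 → A) → A → ℝ}
    (hx : ∀ t h k, 0 ≤ x t h k) (a : Fin T → A) :
    0 ≤ transcriptProb x a :=
  prod_nonneg fun t _ => hx t _ _

theorem sum_transcriptProb_succ (G : ∀ t : Fin (T + 1), (Fin t.1 → A) → A → ℝ) :
    ∑ a, transcriptProb G a =
      ∑ a : Fin T → A, transcriptProb (fun t => G t.castSucc) a * ∑ k, G (Fin.last T) a k := by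
  rw [← (Fin.snocEquiv fun _ => A).sum_comp, Fintype.sum_prod_type, sum_comm]
  refine sum_congr rfl fun a _ => ?_
  rw [mul_sum]
  refine sum_congr rfl fun k _ => ?_
  rw [show (Fin.snocEquiv fun _ => A) (k, a) = Fin.snoc a k from rfl]
  simp only [transcriptProb, Fin.prod_univ_castSucc, transcriptPrefix_snoc_castSucc,
    transcriptPrefix_snoc_last, Fin.snoc_castSucc, Fin.snoc_last]

theorem sum_transcriptProb_le {G : ∀ t : Fin T, (Fin t.1 → A) → A → ℝ} {c : ℝ}
    (hG : ∀ t h k, 0 ≤ G t h k) (hc : ∀ t h, ∑ k, G t h k ≤ c) :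
    ∑ a, transcriptProb G a ≤ c ^ T := by
  induction T with
  | zero => simp [transcriptProb]
  | succ T ih =>
    have hc0 : 0 ≤ c := (sum_nonneg fun k _ => hG 0 (fun i => i.elim0) k).trans (hc 0 _)
    rw [sum_transcriptProb_succ, pow_succ]
    calc _ ≤ ∑ a : Fin T → A, transcriptProb (fun t => G t.castSucc) a * c :=
          sum_le_sum fun a _ => mul_le_mul_of_nonneg_left (hc (Fin.last T) a)
            (transcriptProb_nonneg (fun t => hG t.castSucc) a)
      _ = (∑ a : Fin T → A, transcriptProb (fun t => G t.castSucc) a) * c := (sum_mul ..).symm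
      _ ≤ c ^ T * c := by
          gcongr
          exact ih (fun t => hG t.castSucc) fun t => hc t.castSucc

theorem sum_transcriptProb_eq_one {x : ∀ t : Fin T, (Fin t.1 → A) → A → ℝ}
    (hx : ∀ t h, ∑ k, x t h k = 1) : ∑ a, transcriptProb x a = 1 := by
  induction T with
  | zero => simp [transcriptProb]
  | succ T ih =>
    simp only [sum_transcriptProb_succ, hx, mul_one]
    exact ih fun t => hx t.castSucc

theorem sum_transcriptProb_mul_exp_le {x d : ∀ t : Fin T, (Fin t.1 → A) → A → ℝ}
    {η : ℝ} (hx : ∀ t h, x t h ∈ stdSimplex ℝ A) (hd : ∀ t h k, |d t h k| ≤ 1)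
    (hxd : ∀ t h, ∑ k, x t h k * d t h k = 0) (hη0 : 0 ≤ η) (hη1 : η ≤ 1) :
    ∑ a, transcriptProb x a * exp (η * ∑ t, d t (transcriptPrefix a t) (a t)) ≤
      (1 + η ^ 2) ^ T := by
  have hprod : ∀ a, transcriptProb x a * exp (η * ∑ t, d t (transcriptPrefix a t) (a t)) =
      transcriptProb (fun t h k => x t h k * exp (η * d t h k)) a := fun a => by
    simp only [transcriptProb, mul_sum, exp_sum, prod_mul_distrib]
  simp_rw [hprod]
  refine sum_transcriptProb_le (fun t h k => mul_nonneg ((hx t h).1 k) (exp_pos _).le)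
    fun t h => ?_
  simpa [(hx t h).2] using
    sum_mul_exp_le_of_sum_mul_eq_zero (hx t h).1 (hd t h) (hxd t h) hη0 hη1

end Transcript

section Regret
variable {A : Type} {T : ℕ}

def swapRegret [DecidableEq A] (r : ∀ t : Fin T, (Fin t.1 → A) → A → ℝ) (a : Fin T → A)
    (p : A × A) : ℝ :=
  ∑ t, if a t = p.1 then r t (transcriptPrefix a t) p.1 - r t (transcriptPrefix a t) p.2 else 0

def lossesAlong (r : ∀ t : Fin T, (Fin t.1 → A) → A → ℝ) (a : Fin T → A) : ℕ → A → ℝ :=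
  Function.extend Fin.val (fun t => r t (transcriptPrefix a t)) 0

theorem lossesAlong_val (r : ∀ t : Fin T, (Fin t.1 → A) → A → ℝ) (a : Fin T → A) (t : Fin T) :
    lossesAlong r a t = r t (transcriptPrefix a t) :=
  Fin.val_injective.extend_apply _ _ t

theorem lossesAlong_mem_Icc {r : ∀ t : Fin T, (Fin t.1 → A) → A → ℝ}
    (hr : ∀ t h j, r t h j ∈ Set.Icc (0 : ℝ) 1) (a : Fin T → A) (n : ℕ) (k : A) :
    lossesAlong r a n k ∈ Set.Icc (0 : ℝ) 1 := by
  by_cases hn : n < T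
  · exact lossesAlong_val r a ⟨n, hn⟩ ▸ hr _ _ k
  · rw [lossesAlong, Function.extend_apply' _ _ _ fun ⟨t, ht⟩ => hn (ht ▸ t.2)]
    exact ⟨le_rfl, zero_le_one⟩

variable [Fintype A] [DecidableEq A] [Nonempty A]

theorem playOf_swapStrategy (η : ℝ) (r : ∀ t : Fin T, (Fin t.1 → A) → A → ℝ) (a : Fin T → A)
    (t : Fin T) :
    playOf (swapStrategy T η) r t (transcriptPrefix a t) =
      expWeightsPlay η (cumSwapGain η (lossesAlong r a) t) :=
  congrArg (expWeightsPlay η) <| cumSwapGain_congr η fun s hs =>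
    (Fin.val_injective.extend_apply _ _ (⟨s, hs⟩ : Fin t)).trans
      (lossesAlong_val r a ⟨s, hs.trans t.2⟩).symm

theorem sum_transcriptProb_mul_exp_swapRegret_le {η : ℝ} {r : ∀ t : Fin T, (Fin t.1 → A) → A → ℝ}
    (hr : ∀ t h j, r t h j ∈ Set.Icc (0 : ℝ) 1) (hη0 : 0 ≤ η) (hη1 : η ≤ 1) (p : A × A) :
    ∑ a, transcriptProb (playOf (swapStrategy T η) r) a * exp (η * swapRegret r a p) ≤
      Fintype.card (A × A) * (1 + η ^ 2) ^ T * (1 + η ^ 2) ^ T := by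
  set X := playOf (swapStrategy T η) r
  have hX : ∀ t h, X t h ∈ stdSimplex ℝ A := fun t h => expWeightsPlay_mem_stdSimplex _ _
  -- Realized minus expected regret increment of a round: a martingale difference.
  set d : ∀ t : Fin T, (Fin t.1 → A) → A → ℝ := fun t h k =>
    ((if k = p.1 then 1 else 0) - X t h p.1) * (r t h p.1 - r t h p.2)
  have hd : ∀ t h k, |d t h k| ≤ 1 := fun t h k => by
    have := mem_Icc_of_mem_stdSimplex (hX t h) p.1
    refine abs_mul_sub_le_one (abs_sub_le_of_nonneg_of_le ?_ ?_ this.1 this.2) (hr t h p.1)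
      (hr t h p.2) <;> split_ifs <;> norm_num
  have hXd : ∀ t h, ∑ k, X t h k * d t h k = 0 := fun t h => by
    simp only [d, ← mul_assoc, ← sum_mul, mul_sub, sum_sub_distrib, mul_ite, mul_one, mul_zero,
      sum_ite_eq', mem_univ, if_true, ← sum_mul, (hX t h).2, one_mul, sub_self, zero_mul]
  have hsplit : ∀ a, swapRegret r a p =
      cumSwapGain η (lossesAlong r a) T p + ∑ t, d t (transcriptPrefix a t) (a t) := fun a => by
    rw [cumSwapGain_eq_sum, ← Fin.sum_univ_eq_sum_range, swapRegret, ← sum_add_distrib]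
    refine sum_congr rfl fun t _ => ?_
    rw [lossesAlong_val, ← playOf_swapStrategy]
    simp only [d, swapGain]
    split_ifs <;> ring
  calc ∑ a, transcriptProb X a * exp (η * swapRegret r a p)
      = ∑ a, exp (η * cumSwapGain η (lossesAlong r a) T p) *
          (transcriptProb X a * exp (η * ∑ t, d t (transcriptPrefix a t) (a t))) :=
        sum_congr rfl fun a _ => by rw [hsplit, mul_add, exp_add]; ring
    _ ≤ ∑ a, Fintype.card (A × A) * (1 + η ^ 2) ^ T *
          (transcriptProb X a * exp (η * ∑ t, d t (transcriptPrefix a t) (a t))) :=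
        sum_le_sum fun a _ => mul_le_mul_of_nonneg_right
          (exp_mul_cumSwapGain_le (lossesAlong_mem_Icc hr a) hη0 hη1 T p)
          (mul_nonneg (transcriptProb_nonneg (fun t h => (hX t h).1) a) (exp_pos _).le)
    _ ≤ _ := by
        rw [← mul_sum]
        gcongr
        exact sum_transcriptProb_mul_exp_le hX hd hXd hη0 hη1

theorem sum_transcriptProb_mul_iSup_swapRegret_le {η : ℝ}
    {r : ∀ t : Fin T, (Fin t.1 → A) → A → ℝ} (hr : ∀ t h j, r t h j ∈ Set.Icc (0 : ℝ) 1)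
    (hη0 : 0 < η) (hη1 : η ≤ 1) :
    ∑ a, transcriptProb (playOf (swapStrategy T η) r) a * ⨆ p, swapRegret r a p ≤
      4 * log (Fintype.card A) / η + 2 * η * T := by
  have hX : ∀ t h, playOf (swapStrategy T η) r t h ∈ stdSimplex ℝ A := fun t h =>
    expWeightsPlay_mem_stdSimplex _ _
  have hlogcard : log (Fintype.card (A × A)) = 2 * log (Fintype.card A) := by
    rw [Fintype.card_prod, Nat.cast_mul, log_mul (by positivity) (by positivity)]
    ring
  have hlog : log (1 + η ^ 2) ≤ η ^ 2 := by
    linarith [log_le_sub_one_of_pos (by positivity : 0 < 1 + η ^ 2)]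
  calc _ ≤ log (Fintype.card (A × A) *
          (Fintype.card (A × A) * (1 + η ^ 2) ^ T * (1 + η ^ 2) ^ T)) / η :=
        sum_mul_iSup_le_of_sum_mul_exp_le (transcriptProb_nonneg fun t h => (hX t h).1)
          (sum_transcriptProb_eq_one fun t h => (hX t h).2) hη0
          (sum_transcriptProb_mul_exp_swapRegret_le hr hη0.le hη1)
    _ ≤ (4 * log (Fintype.card A) + 2 * T * η ^ 2) / η := by
        gcongr
        rw [log_mul (by positivity) (by positivity), log_mul (by positivity) (by positivity),
          log_mul (by positivity) (by positivity), log_pow, hlogcard]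
        nlinarith
    _ = 4 * log (Fintype.card A) / η + 2 * η * T := by
        field_simp

end Regret

/-- In the experts setting with `T ≥ 2 ln|A|`, there exists an algorithm
for the Learner guaranteeing, against any adaptive Adversary, expected internal regret
`E[R^T_int] ≤ 4√(2T ln|A|)`, where
`R^T_int = max_{i,j∈A} Σ_{t : a^t = i} (r^t_i − r^t_j)`. -/
theorem internal_regret_bound
    (A : Type) [Fintype A] [Nonempty A] [DecidableEq A] (T : ℕ)
    (hT : 2 * Real.log (Fintype.card A) ≤ T) :
    ∃ σ : ExpertStrategy A T,
      (∀ t h past, (∀ j, 0 ≤ σ t h past j) ∧ ∑ j, σ t h past j = 1) ∧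
      ∀ r : ∀ t : Fin T, (Fin t.1 → A) → A → ℝ,
        (∀ t h j, r t h j ∈ Set.Icc (0 : ℝ) 1) →
        ∑ a : Fin T → A, transcriptProb (playOf σ r) a *
            (⨆ p : A × A, ∑ t, if a t = p.1 then
              r t (transcriptPrefix a t) p.1 - r t (transcriptPrefix a t) p.2 else 0) ≤
          4 * Real.sqrt (2 * T * Real.log (Fintype.card A)) := by
  set L := Real.log (Fintype.card A)
  set η := √(2 * L / T)
  refine ⟨swapStrategy T η, fun t h past => expWeightsPlay_mem_stdSimplex _ _, fun r hr => ?_⟩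
  change ∑ a, transcriptProb _ a * ⨆ p, swapRegret r a p ≤ _
  obtain hA | hA := le_or_gt (Fintype.card A) 1
  · have : Subsingleton A := Fintype.card_le_one_iff_subsingleton.1 hA
    have hzero : ∀ a p, swapRegret r a p = 0 := fun a p =>
      sum_eq_zero fun t _ => by simp [Subsingleton.elim p.2 p.1]
    simp only [hzero, ciSup_const, mul_zero, sum_const_zero]
    positivity
  have hL : 0 < L := log_pos (by exact_mod_cast hA)
  have hT0 : (0 : ℝ) < T := by linarith
  have hη0 : 0 < η := sqrt_pos.2 (by positivity)
  have hη2 : η ^ 2 * T = 2 * L := by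
    rw [sq_sqrt (by positivity)]
    field_simp
  have hη1 : η ≤ 1 := sqrt_le_one.2 ((div_le_one hT0).2 hT)
  have hηT : η * T = √(2 * T * L) := by
    rw [← sqrt_sq (by positivity : 0 ≤ η * T)]
    congr 1
    linear_combination (T : ℝ) * hη2
  calc _ ≤ 4 * L / η + 2 * η * T := sum_transcriptProb_mul_iSup_swapRegret_le hr hη0 hη1
    _ = 4 * (η * T) := by
        field_simp
        linear_combination -2 * hη2
    _ = 4 * √(2 * T * L) := by rw [hηT]
end
end
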